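/- The positive roots Ĩ_n of the cubic equation Ĩ³ + 2(Δ/ξ)Ĩ² + (Δ/ξ)²Ĩ − 4Ī³ = 0 (with Δ = Δ₀ − ξĪ, Δ₀ < 0, ξ > 0, Ī > 0) number three real roots when (Δ/(3ξ))³ + Ī³ < 0 and one real root when (Δ/(3ξ))³ + Ī³ > 0; the transition occurs at ξ = ξ_{c2} = −Δ₀/(2Ī). -/

import Mathlib

/-!
Write `a = Δ/ξ` and `c = 4 Ī³`, so the cubic is `I (I + a)² - c`. The map `I ↦ I (I + a)²` has a
local maximum `-4a³/27` at `-a/3` and a local minimum `0` at `-a`, and the identity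
`I (I + a)² + 4a³/27 = (I + 4a/3) (I + a/3)²` shows that it stays below `-4a³/27` left of `-4a/3`.
Since `27 c + 4 a³ = 108 ((Δ/(3ξ))³ + Ī³)`, a negative sign puts `c` strictly between the two
critical values, and the intermediate value theorem gives one root on each monotone branch; a
positive sign forces every root past `-4a/3`, where the map is strictly increasing. The transition is the sum
of cubes `(Δ/(3ξ))³ + Ī³` vanishing, i.e. `Δ = -3ξĪ`, i.e. `Δ₀ = -2ξĪ`.
-/

def fixedPointCubic (a c I : ℝ) : ℝ := I * (I + a) ^ 2 - c

namespace fixedPointCubic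

variable {a c : ℝ}

lemma continuous (a c : ℝ) : Continuous (fixedPointCubic a c) := by
  unfold fixedPointCubic; fun_prop

lemma add_add_eq_mul_sq (a c I : ℝ) :
    fixedPointCubic a c I + c + 4 * a ^ 3 / 27 = (I + 4 * a / 3) * (I + a / 3) ^ 2 := by
  unfold fixedPointCubic; ring

lemma strictMonoOn : StrictMonoOn (fixedPointCubic a c) {I | 0 ≤ I ∧ 0 ≤ I + a} := by
  rintro x ⟨hx, hxa⟩ y ⟨-, hya⟩ hxy
  refine sub_lt_sub_right ?_ c
  calc x * (x + a) ^ 2 ≤ x * (y + a) ^ 2 := by gcongr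
    _ < y * (y + a) ^ 2 := mul_lt_mul_of_pos_right hxy (pow_pos (by linarith) 2)

lemma pos_abs_add_add_one (hc : 0 ≤ c) : 0 < fixedPointCubic a c (|a| + c + 1) := by
  have h1 : 1 ≤ |a| + c + 1 := by linarith [abs_nonneg a]
  have h2 : c + 1 ≤ |a| + c + 1 + a := by linarith [neg_abs_le a]
  refine sub_pos.mpr ?_
  calc c < |a| + c + 1 + a := by linarith
    _ ≤ (|a| + c + 1 + a) ^ 2 := le_self_pow₀ (by linarith) two_ne_zero
    _ ≤ (|a| + c + 1) * (|a| + c + 1 + a) ^ 2 := le_mul_of_one_le_left (by positivity) h1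

lemma pos_and_add_pos_of_eq_zero (hc : 0 < c) (hdisc : 0 < 27 * c + 4 * a ^ 3) {x : ℝ}
    (hx : fixedPointCubic a c x = 0) : 0 < x ∧ 0 < x + a := by
  have hx_pos : 0 < x := by
    by_contra! h
    have : x * (x + a) ^ 2 ≤ 0 := mul_nonpos_of_nonpos_of_nonneg h (sq_nonneg _)
    unfold fixedPointCubic at hx; linarith
  have hx_gt : 0 < x + 4 * a / 3 := by
    have := add_add_eq_mul_sq a c x
    rw [hx] at this
    exact pos_of_mul_pos_left (by linarith) (sq_nonneg (x + a / 3))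
  refine ⟨hx_pos, ?_⟩
  rcases le_or_gt 0 a with ha | ha <;> linarith

theorem existsUnique_eq_zero (hc : 0 < c) (hdisc : 0 < 27 * c + 4 * a ^ 3) :
    ∃! x, fixedPointCubic a c x = 0 := by
  obtain ⟨x, -, hx⟩ := intermediate_value_Icc (by positivity)
    (continuous a c).continuousOn
    ⟨by simp [fixedPointCubic, hc.le], (pos_abs_add_add_one hc.le).le⟩
  have mem : ∀ {y}, fixedPointCubic a c y = 0 → y ∈ {I | 0 ≤ I ∧ 0 ≤ I + a} := fun hy =>
    have h := pos_and_add_pos_of_eq_zero hc hdisc hy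
    ⟨h.1.le, h.2.le⟩
  exact ⟨x, hx, fun y hy => strictMonoOn.injOn (mem hy) (mem hx) (hy.trans hx.symm)⟩

theorem exists_three_roots (hc : 0 < c) (hdisc : 27 * c + 4 * a ^ 3 < 0) :
    ∃ x y z, x < y ∧ y < z ∧
      fixedPointCubic a c x = 0 ∧ fixedPointCubic a c y = 0 ∧ fixedPointCubic a c z = 0 := by
  have ha : a < 0 := Odd.pow_neg_iff (n := 3) (by decide) |>.mp (by linarith)
  have hcont {s : Set ℝ} : ContinuousOn (fixedPointCubic a c) s := (continuous a c).continuousOn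
  have h0 : fixedPointCubic a c 0 < 0 := by simp [fixedPointCubic, hc]
  have hmax : 0 < fixedPointCubic a c (-a / 3) := by unfold fixedPointCubic; nlinarith
  have hmin : fixedPointCubic a c (-a) < 0 := by simp [fixedPointCubic, hc]
  obtain ⟨x, ⟨-, hx⟩, hx0⟩ :=
    intermediate_value_Ioo (by linarith) hcont ⟨h0, hmax⟩
  obtain ⟨y, ⟨hy₁, hy₂⟩, hy0⟩ :=
    intermediate_value_Ioo' (by linarith) hcont ⟨hmin, hmax⟩
  obtain ⟨z, ⟨hz, -⟩, hz0⟩ :=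
    intermediate_value_Ioo (show -a ≤ |a| + c + 1 by rw [abs_of_neg ha]; linarith) hcont
      ⟨hmin, pos_abs_add_add_one hc.le⟩
  exact ⟨x, y, z, hx.trans hy₁, hy₂.trans hz, hx0, hy0, hz0⟩

end fixedPointCubic

lemma pow_three_add_pow_three_eq_zero_iff {u v : ℝ} : u ^ 3 + v ^ 3 = 0 ↔ u = -v := by
  rw [add_eq_zero_iff_eq_neg, ← Odd.neg_pow (by decide), Odd.pow_inj (by decide)]

theorem first_order_cubic_roots_general
    (ξ Ibar Δ₀ Δ : ℝ) (hξ : 0 < ξ) (hIbar : 0 < Ibar)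
    (hΔ : Δ = Δ₀ - ξ * Ibar)
    (f : ℝ → ℝ)
    (hf : f = fun I => I ^ 3 + 2 * (Δ / ξ) * I ^ 2 + (Δ / ξ) ^ 2 * I - 4 * Ibar ^ 3) :
    ((Δ / (3 * ξ)) ^ 3 + Ibar ^ 3 < 0 →
        ∃ x y z : ℝ, x ≠ y ∧ x ≠ z ∧ y ≠ z ∧ f x = 0 ∧ f y = 0 ∧ f z = 0) ∧
    (0 < (Δ / (3 * ξ)) ^ 3 + Ibar ^ 3 → ∃! x : ℝ, f x = 0) ∧
    ((Δ / (3 * ξ)) ^ 3 + Ibar ^ 3 = 0 ↔ ξ = -Δ₀ / (2 * Ibar)) := by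
  have hf' : f = fixedPointCubic (Δ / ξ) (4 * Ibar ^ 3) := by
    subst hf; funext I; unfold fixedPointCubic; ring
  have hdisc : 27 * (4 * Ibar ^ 3) + 4 * (Δ / ξ) ^ 3 = 108 * ((Δ / (3 * ξ)) ^ 3 + Ibar ^ 3) := by
    field_simp; ring
  have hc : 0 < 4 * Ibar ^ 3 := by positivity
  subst hf'
  refine ⟨fun h => ?_,
    fun h => fixedPointCubic.existsUnique_eq_zero (a := Δ / ξ) hc (by linarith), ?_⟩
  · obtain ⟨x, y, z, hxy, hyz, hx, hy, hz⟩ :=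
      fixedPointCubic.exists_three_roots (a := Δ / ξ) hc (by linarith)
    exact ⟨x, y, z, hxy.ne, (hxy.trans hyz).ne, hyz.ne, hx, hy, hz⟩
  · rw [pow_three_add_pow_three_eq_zero_iff, div_eq_iff (by positivity), eq_div_iff (by positivity),
      hΔ]
    constructor <;> intro h <;> linarith

/-- Root count for the fixed-point cubic of the first-order resonant Hamiltonian:
three real roots when `(Δ/(3ξ))³ + Ibar³ < 0`, one real root when `(Δ/(3ξ))³ + Ibar³ > 0`,
with the transition at `ξ = ξ_c2 = −Δ₀/(2Ibar)`. -/
theorem first_order_cubic_roots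
    (ξ Ibar Δ₀ Δ : ℝ) (hξ : 0 < ξ) (hIbar : 0 < Ibar) (hΔ₀ : Δ₀ < 0)
    (hΔ : Δ = Δ₀ - ξ * Ibar)
    (f : ℝ → ℝ)
    (hf : f = fun I => I ^ 3 + 2 * (Δ / ξ) * I ^ 2 + (Δ / ξ) ^ 2 * I - 4 * Ibar ^ 3) :
    ((Δ / (3 * ξ)) ^ 3 + Ibar ^ 3 < 0 →
        ∃ x y z : ℝ, x ≠ y ∧ x ≠ z ∧ y ≠ z ∧ f x = 0 ∧ f y = 0 ∧ f z = 0) ∧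
    (0 < (Δ / (3 * ξ)) ^ 3 + Ibar ^ 3 → ∃! x : ℝ, f x = 0) ∧
    ((Δ / (3 * ξ)) ^ 3 + Ibar ^ 3 = 0 ↔ ξ = -Δ₀ / (2 * Ibar)) :=
  first_order_cubic_roots_general ξ Ibar Δ₀ Δ hξ hIbar hΔ f hf
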